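/- Let f, g : F_2^N → {0,1} and ν : F_2^N → ℝ with E[ν] = 1, ⟨f*g, ν⟩ = 0, and m = max_{λ≠0} |ν̂(λ)|. If E[f]·E[g] = (m/(1+m))², then E[f] = E[g], and for every λ ≠ 0 with |ν̂(λ)| < m one has f̂(λ) = ĝ(λ) = 0. -/

import Mathlib

/-! Expanding `⟨f * g, ν⟩ = 0` in characters gives
`α β = -∑_{λ ≠ 0} f̂ ĝ ν̂ ≤ m ∑_{λ ≠ 0} |f̂| |ĝ|` with `α = E f`, `β = E g`, and Cauchy–Schwarz with
Parseval (`∑_{λ ≠ 0} f̂² = α - α²` for Boolean `f`) bounds the right side by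
`m √((α - α²)(β - β²))`. If `α β = s²` with `s = m / (1 + m)`, AM–GM gives
`(α - α²)(β - β²) ≤ s²(1 - s)²`, and `m (1 - s) = s` brings the chain back to `s²`. So every step
is an equality: AM–GM forces `α = β`, Cauchy–Schwarz forces `|f̂| = |ĝ|` off `0`, and
`|ν̂(λ)| = m` wherever `f̂(λ) ĝ(λ) ≠ 0`. -/

open Finset

/-- Expectation over the uniform measure on `F_2^N`. -/
noncomputable def fexp {N : ℕ} (f : (Fin N → ZMod 2) → ℝ) : ℝ :=
  (∑ x : Fin N → ZMod 2, f x) / 2 ^ N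

/-- The character `(-1)^{λ·x}` on `F_2^N`. -/
noncomputable def chr {N : ℕ} (l x : Fin N → ZMod 2) : ℝ :=
  if (∑ i, l i * x i : ZMod 2) = 0 then 1 else -1

/-- Fourier transform `f̂(λ) = E_x f(x)(-1)^{λ·x}`. -/
noncomputable def fhat {N : ℕ} (f : (Fin N → ZMod 2) → ℝ) (l : Fin N → ZMod 2) : ℝ :=
  (∑ x : Fin N → ZMod 2, f x * chr l x) / 2 ^ N

/-- Convolution `(f*g)(x) = E_y f(y) g(x-y)`. -/
noncomputable def conv {N : ℕ} (f g : (Fin N → ZMod 2) → ℝ) (x : Fin N → ZMod 2) : ℝ :=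
  (∑ y : Fin N → ZMod 2, f y * g (x - y)) / 2 ^ N

/-- Expectation inner product `⟨f, ν⟩ = E_x f(x) ν(x)`. -/
noncomputable def einner {N : ℕ} (f ν : (Fin N → ZMod 2) → ℝ) : ℝ :=
  (∑ x : Fin N → ZMod 2, f x * ν x) / 2 ^ N

theorem hoffman_scalar_equality {α β m U : ℝ} (hα : 0 < α) (hβ : 0 < β) (hU : 0 ≤ U)
    (hαβ : α * β = (m / (1 + m)) ^ 2) (hlower : α * β ≤ m * U)
    (hupper : U ^ 2 ≤ (α - α ^ 2) * (β - β ^ 2)) :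
    α = β ∧ U = α - α ^ 2 ∧ m * U = α * β := by
  have hm : 0 < m := by nlinarith [mul_pos hα hβ]
  have hms : m * (1 - m / (1 + m)) = m / (1 + m) := by field_simp; ring
  generalize m / (1 + m) = s at hαβ hms
  have hs : 0 < s := by nlinarith [mul_pos hα hβ]
  have hamgm : 2 * s ≤ α + β := by nlinarith [sq_nonneg (α - β)]
  have hprod : (α - α ^ 2) * (β - β ^ 2) = s ^ 2 * (1 - (α + β) + s ^ 2) := by
    linear_combination (1 - α - β + α * β + s ^ 2) * hαβ
  -- the chain `s⁴ ≤ (m U)² ≤ m² s² (1 - (α + β) + s²) ≤ m² s² (1 - s)² = s⁴` is tight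
  have hchain : (m * U) ^ 2 ≤ (m * s) ^ 2 * (1 - (α + β) + s ^ 2) := by
    rw [mul_pow, mul_pow, mul_assoc, ← hprod]
    exact mul_le_mul_of_nonneg_left hupper (sq_nonneg m)
  have htop : (m * s) ^ 2 * (1 - 2 * s + s ^ 2) = (s ^ 2) ^ 2 := by
    linear_combination s ^ 2 * (m * (1 - s) + s) * hms
  have hbottom : (s ^ 2) ^ 2 ≤ (m * U) ^ 2 :=
    pow_le_pow_left₀ (sq_nonneg s) (hαβ ▸ hlower) 2
  have hgap : 0 ≤ (m * s) ^ 2 * (2 * s - (α + β)) := by linarith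
  have hsum : α + β = 2 * s := by
    linarith [(mul_nonneg_iff_of_pos_left (by positivity)).mp hgap]
  have hmU : m * U = s ^ 2 := by nlinarith
  have hαβeq : α = β := by nlinarith [sq_nonneg (α - β)]
  subst hαβeq
  have hαs : α = s := by linarith
  refine ⟨rfl, mul_left_cancel₀ hm.ne' ?_, by rw [hmU, hαβ]⟩
  rw [hmU, hαs]; linear_combination -s * hms

theorem abs_eq_abs_of_sum_sq_eq {ι : Type*} (T : Finset ι) (a b : ι → ℝ) {A : ℝ}
    (ha : ∑ l ∈ T, a l ^ 2 = A) (hb : ∑ l ∈ T, b l ^ 2 = A)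
    (hab : ∑ l ∈ T, |a l| * |b l| = A) : ∀ l ∈ T, |a l| = |b l| := by
  have hzero : ∑ l ∈ T, (|a l| - |b l|) ^ 2 = 0 := by
    have hexpand (l : ι) : (|a l| - |b l|) ^ 2 = a l ^ 2 + b l ^ 2 - 2 * (|a l| * |b l|) := by
      rw [sub_sq, sq_abs, sq_abs]; ring
    simp only [hexpand, sum_sub_distrib, sum_add_distrib, ← mul_sum, ha, hb, hab]
    ring
  intro l hl
  have := (sum_eq_zero_iff_of_nonneg fun l _ => sq_nonneg _).mp hzero l hl
  exact sub_eq_zero.mp (pow_eq_zero_iff two_ne_zero |>.mp this)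

theorem hoffman_equality_of_sums {ι : Type*} (T : Finset ι) (a b c : ι → ℝ) {α β m : ℝ}
    (hα : 0 < α) (hβ : 0 < β)
    (ha : ∑ l ∈ T, a l ^ 2 = α - α ^ 2) (hb : ∑ l ∈ T, b l ^ 2 = β - β ^ 2)
    (habc : ∑ l ∈ T, a l * b l * c l = -(α * β)) (hc : ∀ l ∈ T, |c l| ≤ m)
    (hαβ : α * β = (m / (1 + m)) ^ 2) :
    α = β ∧ ∀ l ∈ T, |c l| < m → a l = 0 ∧ b l = 0 := by
  set U := ∑ l ∈ T, |a l| * |b l|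
  set Q := ∑ l ∈ T, |a l| * |b l| * |c l|
  have hlower : α * β ≤ Q := by
    calc α * β = -∑ l ∈ T, a l * b l * c l := by rw [habc, neg_neg]
      _ ≤ |∑ l ∈ T, a l * b l * c l| := neg_le_abs _
      _ ≤ Q := by simpa only [abs_mul] using abs_sum_le_sum_abs (fun l => a l * b l * c l) T
  have hQU : Q ≤ m * U := by
    rw [mul_sum]
    exact sum_le_sum fun l hl => by
      rw [mul_comm m]; exact mul_le_mul_of_nonneg_left (hc l hl) (by positivity)
  have hCS : U ^ 2 ≤ (α - α ^ 2) * (β - β ^ 2) := by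
    rw [← ha, ← hb]
    simpa only [sq_abs] using sum_mul_sq_le_sq_mul_sq T (|a ·|) (|b ·|)
  obtain ⟨rfl, hU, hmU⟩ := hoffman_scalar_equality hα hβ (by positivity) hαβ (hlower.trans hQU) hCS
  have habs := abs_eq_abs_of_sum_sq_eq T a b ha hb hU
  have hsat : ∀ l ∈ T, |a l| * |b l| * (m - |c l|) = 0 := by
    refine (sum_eq_zero_iff_of_nonneg fun l hl => ?_).mp ?_
    · exact mul_nonneg (by positivity) (sub_nonneg.mpr (hc l hl))
    · have hsum : ∑ l ∈ T, |a l| * |b l| * (m - |c l|) = m * U - Q := by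
        simp only [U, Q, mul_sum, ← sum_sub_distrib]
        exact sum_congr rfl fun l _ => by ring
      linarith
  refine ⟨rfl, fun l hl hlt => ?_⟩
  have hab0 : |a l| * |b l| = 0 :=
    (mul_eq_zero.mp (hsat l hl)).resolve_right (sub_ne_zero.mpr hlt.ne')
  rw [← habs l hl, mul_self_eq_zero] at hab0
  exact ⟨abs_eq_zero.mp hab0, abs_eq_zero.mp (habs l hl ▸ hab0)⟩

section Fourier

variable {N : ℕ}

theorem chr_comm (l x : Fin N → ZMod 2) : chr l x = chr x l := by
  simp only [chr, mul_comm (l _)]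

theorem chr_add_right (l x y : Fin N → ZMod 2) : chr l (x + y) = chr l x * chr l y := by
  change ite (l ⬝ᵥ (x + y) = 0) _ _ = ite (l ⬝ᵥ x = 0) _ _ * ite (l ⬝ᵥ y = 0) _ _
  rw [dotProduct_add]
  generalize l ⬝ᵥ x = a
  generalize l ⬝ᵥ y = b
  obtain rfl | rfl : a = 0 ∨ a = 1 := by revert a; decide
  all_goals obtain rfl | rfl : b = 0 ∨ b = 1 := by revert b; decide
  all_goals simp [show (1 : ZMod 2) + 1 = 0 from rfl]

theorem chr_add_left (l l' x : Fin N → ZMod 2) : chr (l + l') x = chr l x * chr l' x := by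
  simp only [chr_comm _ x, chr_add_right]

theorem chr_zero_left (x : Fin N → ZMod 2) : chr 0 x = 1 := by
  simp [chr]

theorem sum_chr (x : Fin N → ZMod 2) :
    ∑ l : Fin N → ZMod 2, chr l x = if x = 0 then 2 ^ N else 0 := by
  split_ifs with hx
  · simp [hx, chr_comm _ 0, chr_zero_left]
  · obtain ⟨i, hi⟩ : ∃ i, x i ≠ 0 := Function.ne_iff.mp hx
    have hflip : chr (Pi.single i 1) x = -1 := by
      change ite (Pi.single i 1 ⬝ᵥ x = 0) _ _ = _
      rw [single_dotProduct, one_mul, if_neg hi]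
    have hshift := Fintype.sum_equiv (Equiv.addLeft (Pi.single i 1)) _ (fun l => chr l x)
      fun l => rfl
    simp only [Equiv.coe_addLeft, chr_add_left, hflip, neg_one_mul, sum_neg_distrib]
      at hshift
    linarith

theorem fhat_zero (f : (Fin N → ZMod 2) → ℝ) : fhat f 0 = fexp f := by
  simp [fhat, fexp, chr_zero_left]

theorem fhat_conv (f g : (Fin N → ZMod 2) → ℝ) (l : Fin N → ZMod 2) :
    fhat (conv f g) l = fhat f l * fhat g l := by
  have hshift (y : Fin N → ZMod 2) :
      ∑ x, g (x - y) * chr l x = chr l y * ∑ z, g z * chr l z := by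
    rw [mul_sum, ← Fintype.sum_equiv (Equiv.addRight y) (fun z => g z * chr l (z + y)) _
      fun z => by simp]
    exact sum_congr rfl fun z _ => by rw [chr_add_right]; ring
  calc fhat (conv f g) l
      = (∑ y, f y * ∑ x, g (x - y) * chr l x) / 2 ^ N / 2 ^ N := by
        simp only [fhat, conv, sum_div, div_mul_eq_mul_div, sum_mul, mul_sum]
        rw [sum_comm]; simp only [mul_assoc]
    _ = fhat f l * fhat g l := by
        simp only [hshift, fhat, div_mul_div_comm, sum_mul, mul_assoc]
        ring

theorem sum_fhat_mul_fhat (f g : (Fin N → ZMod 2) → ℝ) :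
    ∑ l, fhat f l * fhat g l = einner f g := by
  have horth (x y : Fin N → ZMod 2) :
      ∑ l, chr l x * chr l y = if x = y then 2 ^ N else 0 := by
    have hneg : -y = y := funext fun i => ZMod.neg_eq_self_mod_two (y i)
    simp_rw [← chr_add_right, sum_chr, add_eq_zero_iff_eq_neg, hneg]
  have hprod (l : Fin N → ZMod 2) : fhat f l * fhat g l
      = (∑ x, ∑ y, f x * g y * (chr l x * chr l y)) / 2 ^ N / 2 ^ N := by
    rw [fhat, fhat, div_mul_div_comm, sum_mul_sum, div_div]
    exact congrArg (· / _) <| sum_congr rfl fun x _ => sum_congr rfl fun y _ => by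
      ring
  calc ∑ l, fhat f l * fhat g l
      = (∑ x, ∑ y, f x * g y * ∑ l, chr l x * chr l y) / 2 ^ N / 2 ^ N := by
        simp only [hprod, ← sum_div, mul_sum]
        rw [sum_comm]
        exact congrArg (· / _ / _) (sum_congr rfl fun x _ => sum_comm)
    _ = einner f g := by
        simp only [horth, mul_ite, mul_zero, sum_ite_eq, mem_univ, if_true, einner, ← sum_mul]
        field_simp

theorem sum_erase_zero_fhat_mul_fhat_mul_fhat (f g ν : (Fin N → ZMod 2) → ℝ) :
    ∑ l ∈ univ.erase 0, fhat f l * fhat g l * fhat ν l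
      = einner (conv f g) ν - fexp f * fexp g * fexp ν := by
  rw [sum_erase_eq_sub (mem_univ 0), ← sum_fhat_mul_fhat]
  simp only [fhat_conv, fhat_zero]

variable {f : (Fin N → ZMod 2) → ℝ}

theorem sum_fhat_sq_of_boolean (hf : ∀ x, f x = 0 ∨ f x = 1) :
    ∑ l, fhat f l ^ 2 = fexp f := by
  simp only [sq, sum_fhat_mul_fhat, einner, fexp]
  congr 1
  exact sum_congr rfl fun x _ => by rcases hf x with h | h <;> simp [h]

theorem sum_erase_zero_fhat_sq_of_boolean (hf : ∀ x, f x = 0 ∨ f x = 1) :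
    ∑ l ∈ univ.erase 0, fhat f l ^ 2 = fexp f - fexp f ^ 2 := by
  rw [sum_erase_eq_sub (mem_univ 0), sum_fhat_sq_of_boolean hf, fhat_zero]

theorem fexp_pos_of_boolean (hf : ∀ x, f x = 0 ∨ f x = 1) (hf0 : ∃ x, f x ≠ 0) :
    0 < fexp f := by
  obtain ⟨x, hx⟩ := hf0
  have hnonneg (y : Fin N → ZMod 2) : 0 ≤ f y := by rcases hf y with h | h <;> simp [h]
  have hpos : 0 < ∑ y, f y :=
    sum_pos' (fun y _ => hnonneg y) ⟨x, mem_univ x, (hnonneg x).lt_of_ne' hx⟩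
  exact div_pos hpos (by positivity)

end Fourier

/-- Equality case of the weighted Hoffman bound. -/
theorem hoffman_equality {N : ℕ} (f g ν : (Fin N → ZMod 2) → ℝ)
    (hf : ∀ x, f x = 0 ∨ f x = 1) (hg : ∀ x, g x = 0 ∨ g x = 1)
    (hf0 : ∃ x, f x ≠ 0) (hg0 : ∃ x, g x ≠ 0)
    (hν : fexp ν = 1) (horth : einner (conv f g) ν = 0)
    (m : ℝ)
    (hm : IsGreatest {r : ℝ | ∃ l : Fin N → ZMod 2, l ≠ 0 ∧ r = |fhat ν l|} m)
    (heq : fexp f * fexp g = (m / (1 + m)) ^ 2) :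
    fexp f = fexp g ∧
      ∀ l : Fin N → ZMod 2, l ≠ 0 → |fhat ν l| < m → fhat f l = 0 ∧ fhat g l = 0 := by
  have hcubic := sum_erase_zero_fhat_mul_fhat_mul_fhat f g ν
  rw [horth, hν, mul_one, zero_sub] at hcubic
  have hbound : ∀ l ∈ univ.erase 0, |fhat ν l| ≤ m :=
    fun l hl => hm.2 ⟨l, ne_of_mem_erase hl, rfl⟩
  obtain ⟨hfg, hvanish⟩ := hoffman_equality_of_sums _ _ _ _ (fexp_pos_of_boolean hf hf0)
    (fexp_pos_of_boolean hg hg0) (sum_erase_zero_fhat_sq_of_boolean hf)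
    (sum_erase_zero_fhat_sq_of_boolean hg) hcubic hbound heq
  exact ⟨hfg, fun l hl => hvanish l (mem_erase.mpr ⟨hl, mem_univ l⟩)⟩
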